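/- Differentiation property of the Clifford Fourier transform: for f : ℝ³ → Cl(3,0) differentiable with f and a·∇f integrable, and f vanishing at infinity, F{a·∇f}(ω) = i₃ (a·ω) F{f}(ω) for any constant vector a ∈ ℝ³. -/

import Mathlib

/-!
Integration by parts moves the derivative from `f` onto the kernel: the boundary term vanishes
because `f`, `a·∇f` and `f e^{−i₃ ω·x}` are integrable, and differentiating the kernel gives
`a·∇ e^{−i₃ ω·x} = −(ω·a) i₃ e^{−i₃ ω·x}`. Since `i₃` is central in Cl(3,0), it can be pulled out
of the product with `f` and then out of the integral.
-/

open MeasureTheory Real Filter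

noncomputable section

/-- The Clifford algebra Cl(3,0) as coefficient vectors over the basis
{1, e₁, e₂, e₃, e₁₂, e₃₁, e₂₃, e₁₂₃} (indices 0,…,7). -/
abbrev Cl3 : Type := Fin 8 → ℝ

namespace Cl3

/-- Structure constants: e_i * e_j = sign • e_index. -/
def tbl : Fin 8 → Fin 8 → Fin 8 × ℝ :=
  ![![(0, 1), (1, 1), (2, 1), (3, 1), (4, 1), (5, 1), (6, 1), (7, 1)],
    ![(1, 1), (0, 1), (4, 1), (5, -1), (2, 1), (3, -1), (7, 1), (6, 1)],
    ![(2, 1), (4, -1), (0, 1), (6, 1), (1, -1), (7, 1), (3, 1), (5, 1)],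
    ![(3, 1), (5, 1), (6, -1), (0, 1), (7, 1), (1, 1), (2, -1), (4, 1)],
    ![(4, 1), (2, -1), (1, 1), (7, 1), (0, -1), (6, 1), (5, -1), (3, -1)],
    ![(5, 1), (3, 1), (7, 1), (1, -1), (6, -1), (0, -1), (4, 1), (2, -1)],
    ![(6, 1), (7, 1), (3, -1), (2, 1), (5, 1), (4, -1), (0, -1), (1, -1)],
    ![(7, 1), (6, 1), (5, 1), (4, 1), (3, -1), (2, -1), (1, -1), (0, -1)]]

/-- The geometric (Clifford) product on Cl(3,0). -/
def mul (x y : Cl3) : Cl3 := fun k =>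
  ∑ i : Fin 8, ∑ j : Fin 8,
    (if (tbl i j).1 = k then (tbl i j).2 else 0) * x i * y j

/-- The reverse anti-automorphism: negates the grade-2 and grade-3 parts. -/
def reverse (M : Cl3) : Cl3 := fun k => if 4 ≤ k.val then -M k else M k

/-- The scalar (grade-0) part. -/
def scalarPart (M : Cl3) : ℝ := M 0

/-- The square norm ‖M‖² = ⟨M M̃⟩₀. -/
def normSq (M : Cl3) : ℝ := scalarPart (mul M (reverse M))

/-- The identity 1 of Cl(3,0). -/
def one : Cl3 := fun k => if k = 0 then 1 else 0

/-- The unit pseudoscalar i₃ = e₁e₂e₃. -/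
def i3 : Cl3 := fun k => if k = 7 then 1 else 0

/-- The orthonormal vector generators e₁, e₂, e₃. -/
def e (i : Fin 3) : Cl3 := fun k => if k.val = i.val + 1 then 1 else 0

/-- Euclidean inner product on ℝ³. -/
def dot (a b : Fin 3 → ℝ) : ℝ := ∑ i, a i * b i

/-- The kernel e^{−i₃ θ} = cos θ − i₃ sin θ of the Clifford Fourier transform. -/
def expNeg (θ : ℝ) : Cl3 := Real.cos θ • one - Real.sin θ • i3

/-- e^{+i₃ θ} = cos θ + i₃ sin θ. -/
def expPos (θ : ℝ) : Cl3 := Real.cos θ • one + Real.sin θ • i3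

/-- The Clifford Fourier transform F{f}(ω) = ∫ f(x) e^{−i₃ ω·x} d³x. -/
def CFT (f : (Fin 3 → ℝ) → Cl3) (ω : Fin 3 → ℝ) : Cl3 :=
  ∫ x : Fin 3 → ℝ, mul (f x) (expNeg (dot ω x))

/-- Vector differential a·∇f (directional derivative in direction a). -/
def dirDeriv (a : Fin 3 → ℝ) (f : (Fin 3 → ℝ) → Cl3) (x : Fin 3 → ℝ) : Cl3 :=
  fderiv ℝ f x a

/-- Partial derivative ∂ₖ f. -/
def pderiv (k : Fin 3) (f : (Fin 3 → ℝ) → Cl3) (x : Fin 3 → ℝ) : Cl3 :=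
  fderiv ℝ f x (Pi.single k 1)

/-- The vector derivative ∇f = Σₖ eₖ ∂ₖ f. -/
def vecDeriv (f : (Fin 3 → ℝ) → Cl3) (x : Fin 3 → ℝ) : Cl3 :=
  ∑ k : Fin 3, mul (e k) (pderiv k f x)

/-- Convolution of Cl(3,0)-valued functions. -/
def conv (f g : (Fin 3 → ℝ) → Cl3) (x : Fin 3 → ℝ) : Cl3 :=
  ∫ y : Fin 3 → ℝ, mul (f y) (g (x - y))

end Cl3

open Cl3

namespace Cl3

def mulₗ : Cl3 →ₗ[ℝ] Cl3 →ₗ[ℝ] Cl3 :=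
  LinearMap.mk₂ ℝ mul
    (fun x x' y => by
      ext k; simp only [mul, Pi.add_apply, mul_add, add_mul, Finset.sum_add_distrib])
    (fun c x y => by ext k; simp only [mul, Pi.smul_apply, smul_eq_mul, Finset.mul_sum]; ac_rfl)
    (fun x y y' => by ext k; simp only [mul, Pi.add_apply, mul_add, Finset.sum_add_distrib])
    (fun c x y => by ext k; simp only [mul, Pi.smul_apply, smul_eq_mul, Finset.mul_sum]; ac_rfl)

def mulL : Cl3 →L[ℝ] Cl3 →L[ℝ] Cl3 :=
  LinearMap.toContinuousLinearMap (LinearMap.toContinuousLinearMap.toLinearMap ∘ₗ mulₗ)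

@[simp] lemma mulL_apply (x y : Cl3) : mulL x y = mul x y := rfl

lemma mul_i3_comm (x y : Cl3) : mul x (mul i3 y) = mul i3 (mul x y) := by
  ext k; fin_cases k <;> simp [mul, i3, tbl, Fin.sum_univ_eight] <;> ring

lemma i3_mul_expNeg (θ : ℝ) : mul i3 (expNeg θ) = sin θ • one + cos θ • i3 := by
  ext k; fin_cases k <;> simp [mul, expNeg, one, i3, tbl, Fin.sum_univ_eight]

lemma norm_expNeg_le_one (θ : ℝ) : ‖expNeg θ‖ ≤ 1 := by
  refine (pi_norm_le_iff_of_nonneg zero_le_one).2 fun k => ?_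
  fin_cases k <;> simp [expNeg, one, i3, abs_cos_le_one, abs_sin_le_one]

lemma hasDerivAt_expNeg (θ : ℝ) : HasDerivAt expNeg (-mul i3 (expNeg θ)) θ := by
  rw [i3_mul_expNeg, neg_add, ← neg_smul, ← sub_eq_add_neg]
  exact ((hasDerivAt_cos θ).smul_const one).sub ((hasDerivAt_sin θ).smul_const i3)

def dotL (ω : Fin 3 → ℝ) : (Fin 3 → ℝ) →L[ℝ] ℝ := ∑ i, ω i • ContinuousLinearMap.proj i

@[simp] lemma coe_dotL (ω : Fin 3 → ℝ) : ⇑(dotL ω) = dot ω := by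
  ext v
  simp [dotL, dot]

lemma dot_comm (a b : Fin 3 → ℝ) : dot a b = dot b a := dotProduct_comm a b

lemma hasFDerivAt_expNeg_dot (ω x : Fin 3 → ℝ) :
    HasFDerivAt (fun x => expNeg (dot ω x))
      ((ContinuousLinearMap.toSpanSingleton ℝ (-mul i3 (expNeg (dot ω x)))).comp (dotL ω)) x :=
  (hasDerivAt_expNeg (dot ω x)).hasFDerivAt.comp x (dotL ω).hasFDerivAt

lemma fderiv_expNeg_dot_apply (ω x a : Fin 3 → ℝ) :
    fderiv ℝ (fun x => expNeg (dot ω x)) x a = -(dot ω a • mul i3 (expNeg (dot ω x))) := by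
  simp [(hasFDerivAt_expNeg_dot ω x).fderiv]

lemma differentiable_expNeg_dot (ω : Fin 3 → ℝ) : Differentiable ℝ fun x => expNeg (dot ω x) :=
  fun x => (hasFDerivAt_expNeg_dot ω x).differentiableAt

lemma integrable_mul_expNeg_dot {μ : Measure (Fin 3 → ℝ)} {g : (Fin 3 → ℝ) → Cl3}
    (hg : Integrable g μ) (ω : Fin 3 → ℝ) :
    Integrable (fun x => mul (g x) (expNeg (dot ω x))) μ :=
  mulL.integrable_of_bilin_of_bdd_right 1 hg
    (differentiable_expNeg_dot ω).continuous.aestronglyMeasurable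
    (ae_of_all _ fun _ => norm_expNeg_le_one _)

end Cl3

theorem CFT_dirDeriv_general (f : (Fin 3 → ℝ) → Cl3) (a : Fin 3 → ℝ)
    (hdiff : Differentiable ℝ f) (hf : Integrable f)
    (hdf : Integrable (fun x => dirDeriv a f x)) (ω : Fin 3 → ℝ) :
    CFT (fun x => dirDeriv a f x) ω = (dot a ω) • mul i3 (CFT f ω) := by
  set E : (Fin 3 → ℝ) → Cl3 := fun x => expNeg (dot ω x)
  have hfE := integrable_mul_expNeg_dot hf ω
  have hf_dE : (fun x => mulL (f x) (fderiv ℝ E x a))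
      = fun x => -(dot ω a • mulL i3 (mul (f x) (E x))) := by
    ext1 x
    rw [fderiv_expNeg_dot_apply, map_neg, map_smul, mulL_apply, mulL_apply, mul_i3_comm]
  have hf_dE_int : Integrable (fun x => mulL (f x) (fderiv ℝ E x a)) := by
    rw [hf_dE]
    exact (((mulL i3).integrable_comp hfE).smul (dot ω a)).neg
  calc CFT (fun x => dirDeriv a f x) ω = ∫ x, mulL (fderiv ℝ f x a) (E x) := rfl
    _ = -∫ x, mulL (f x) (fderiv ℝ E x a) := by
      rw [integral_bilinear_fderiv_right_eq_neg_left_of_integrable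
        (integrable_mul_expNeg_dot hdf ω) hf_dE_int hfE (fun x _ => hdiff x)
        (fun x _ => differentiable_expNeg_dot ω x), neg_neg]
    _ = dot ω a • mul i3 (CFT f ω) := by
      rw [hf_dE, integral_neg, neg_neg, integral_smul, (mulL i3).integral_comp_comm hfE]
      rfl
    _ = dot a ω • mul i3 (CFT f ω) := by rw [dot_comm]

/-- Differentiation property: F{a·∇f}(ω) = i₃ (a·ω) F{f}(ω). -/
theorem CFT_dirDeriv (f : (Fin 3 → ℝ) → Cl3) (a : Fin 3 → ℝ)
    (hdiff : Differentiable ℝ f) (hf : Integrable f)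
    (hdf : Integrable (fun x => dirDeriv a f x))
    (hdecay : Tendsto f (cocompact (Fin 3 → ℝ)) (nhds 0)) (ω : Fin 3 → ℝ) :
    CFT (fun x => dirDeriv a f x) ω = (dot a ω) • mul i3 (CFT f ω) :=
  CFT_dirDeriv_general f a hdiff hf hdf ω
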